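/- arXiv:1302.6655 — 3 statements merged into one kernel-verified Lean document; each statement's English description precedes it below -/
import Mathlib

section
/- Define σ(t) = log(-2μ - t) - log(t - μ) - 3μ/(t - μ) for t ∈ (μ, -2μ), where μ < 0. Then σ is a strictly monotone bijection from (μ, -2μ) onto ℝ; in particular, for every x ∈ ℝ there exists a unique t ∈ (μ, -2μ) with σ(t) = x. -/
/-!
Write `σ(t) = log(b - t) - log(t - a) + k/(t - a)` with `a = μ`, `b = -2μ`, `k = -3μ ≥ 0`.
Each of the three terms is decreasing on `(a, b)`, and `σ` is continuous there. As `t → a⁺` the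
terms `-log(t - a)` and `k/(t - a)` blow up to `+∞`, while as `t → b⁻` the term `log(b - t)`
drops to `-∞`; by the intermediate value theorem `σ` takes every real value, and by strict
monotonicity exactly once.
-/

open Filter Set Topology Real

lemma tendsto_sub_const_nhdsGT_zero (a : ℝ) : Tendsto (fun t => t - a) (𝓝[>] a) (𝓝[>] 0) := by
  simpa using (continuous_sub_right a).continuousWithinAt.tendsto_nhdsWithin
    (x := a) (s := Ioi a) (t := Ioi 0) fun t ht => sub_pos.2 ht

lemma tendsto_const_sub_nhdsLT_zero (b : ℝ) : Tendsto (fun t => b - t) (𝓝[<] b) (𝓝[>] 0) := by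
  simpa using (continuous_sub_left b).continuousWithinAt.tendsto_nhdsWithin
    (x := b) (s := Iio b) (t := Ioi 0) fun t ht => sub_pos.2 ht

noncomputable def logRatioPole (a b k t : ℝ) : ℝ := log (b - t) - log (t - a) + k / (t - a)

section
variable {a b k : ℝ}

lemma strictAntiOn_logRatioPole (hk : 0 ≤ k) : StrictAntiOn (logRatioPole a b k) (Ioo a b) := by
  rintro s ⟨has, hsb⟩ t ⟨hat, htb⟩ hst
  have hlog_left : log (b - t) < log (b - s) := log_lt_log (by linarith) (by linarith)
  have hlog_right : log (s - a) < log (t - a) := log_lt_log (by linarith) (by linarith)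
  have hpole : k / (t - a) ≤ k / (s - a) :=
    div_le_div_of_nonneg_left hk (by linarith) (by linarith)
  unfold logRatioPole
  linarith

lemma continuousOn_logRatioPole : ContinuousOn (logRatioPole a b k) (Ioo a b) := by
  rintro t ⟨hat, htb⟩
  have hta : t - a ≠ 0 := by linarith
  have hbt : b - t ≠ 0 := by linarith
  unfold logRatioPole
  fun_prop (disch := assumption)

lemma tendsto_logRatioPole_nhdsGT (hab : a < b) (hk : 0 ≤ k) :
    Tendsto (logRatioPole a b k) (𝓝[>] a) atTop := by
  have hleft : Tendsto (fun t => log (b - t)) (𝓝[>] a) (𝓝 (log (b - a))) :=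
    ((continuousAt_const.sub continuousAt_id).log (sub_pos.2 hab).ne').tendsto.mono_left
      nhdsWithin_le_nhds
  have hright : Tendsto (fun t => -log (t - a)) (𝓝[>] a) atTop :=
    tendsto_neg_atBot_atTop.comp (tendsto_log_nhdsGT_zero.comp (tendsto_sub_const_nhdsGT_zero a))
  have hpole : 0 ≤ᶠ[𝓝[>] a] fun t => k / (t - a) := by
    filter_upwards [self_mem_nhdsWithin] with t (hat : a < t)
    exact div_nonneg hk (sub_pos.2 hat).le
  unfold logRatioPole
  simpa only [sub_eq_add_neg] using (hleft.add_atTop hright).atTop_add_zero_eventuallyLE hpole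

lemma tendsto_logRatioPole_nhdsLT (hab : a < b) :
    Tendsto (logRatioPole a b k) (𝓝[<] b) atBot := by
  have hleft : Tendsto (fun t => log (b - t)) (𝓝[<] b) atBot :=
    tendsto_log_nhdsGT_zero.comp (tendsto_const_sub_nhdsLT_zero b)
  have hright : Tendsto (fun t => k / (t - a) - log (t - a)) (𝓝[<] b)
      (𝓝 (k / (b - a) - log (b - a))) := by
    have hba : b - a ≠ 0 := (sub_pos.2 hab).ne'
    exact ((continuousAt_const.div (continuousAt_id.sub continuousAt_const) hba).sub
      ((continuousAt_id.sub continuousAt_const).log hba)).tendsto.mono_left nhdsWithin_le_nhds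
  convert hleft.atBot_add hright using 2 with t
  simp only [logRatioPole]
  ring

lemma surjOn_logRatioPole (hab : a < b) (hk : 0 ≤ k) :
    SurjOn (logRatioPole a b k) (Ioo a b) univ :=
  continuousOn_logRatioPole.surjOn_of_tendsto' (nonempty_Ioo.2 hab)
    (by rw [tendsto_comp_coe_Ioo_atBot hab]; exact tendsto_logRatioPole_nhdsGT hab hk)
    (by rw [tendsto_comp_coe_Ioo_atTop hab]; exact tendsto_logRatioPole_nhdsLT hab)

end

/-- For `μ < 0`, `σ(t) = log(-2μ-t) - log(t-μ) - 3μ/(t-μ)` is a strictly monotone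
bijection from `(μ, -2μ)` onto `ℝ`: it is strictly antitone on the interval, and
every real `x` has a unique preimage `t ∈ (μ, -2μ)`. -/
theorem stmt_1 (μ : ℝ) (hμ : μ < 0) (σ : ℝ → ℝ)
    (hσ : ∀ t, σ t = Real.log (-2*μ - t) - Real.log (t - μ) - 3*μ/(t - μ)) :
    StrictAntiOn σ (Set.Ioo μ (-2*μ)) ∧
    ∀ x : ℝ, ∃! t : ℝ, t ∈ Set.Ioo μ (-2*μ) ∧ σ t = x := by
  obtain rfl : σ = logRatioPole μ (-2*μ) (-(3*μ)) :=
    funext fun t => by rw [hσ, logRatioPole]; ring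
  have hk : 0 ≤ -(3*μ) := by linarith
  have hanti := strictAntiOn_logRatioPole (a := μ) (b := -2*μ) hk
  refine ⟨hanti, fun x => ?_⟩
  obtain ⟨t, ht, rfl⟩ := surjOn_logRatioPole (by linarith : μ < -2*μ) hk (mem_univ x)
  exact ⟨t, ⟨ht, rfl⟩, fun s hs => hanti.injOn hs.1 ht hs.2⟩
end

section
/- Let g = e^{2φ}|dz|² be a conformal metric on a punctured disk with finite area and finite Calabi energy, and define φ̄(r) = (1/2π)∫₀^{2π} φ(r e^{iθ}) dθ. Assume: (i) lim_{r→0}(φ̄(r) + log r) = -∞; (ii) lim_{r→0} φ̄'(r)·r exists and is finite; (iii) there exist β ∈ (0,1) and constants C₁, C₂ with (1/β)(φ̄(r)+log r)+C₁ ≤ φ(z)+log|z| ≤ β(φ̄(r)+log r)+C₂ for |z|=r. Then the following are equivalent: (a) lim_{z→0} (φ(z)+log|z|)/log|z| = 0; (b) liminf_{r→0} ∫₀^{2π} r·∂(φ+log r)/∂r dθ = 0. -/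
open Filter MeasureTheory intervalIntegral Set

lemma inv_tendsto_atBot' {α : Type*} {l : Filter α} {f : α → ℝ}
    (h : Tendsto f l atBot) : Tendsto (fun x => (f x)⁻¹) l (nhds 0) := by
  have h1 : Tendsto (fun x => -f x) l atTop := tendsto_neg_atBot_atTop.comp h
  have h2 := h1.inv_tendsto_atTop
  have h3 : Tendsto (fun x => -(-f x)⁻¹) l (nhds (-0)) := h2.neg
  simp only [inv_neg, neg_neg] at h3
  simpa using h3

lemma cusp_chain (r₀ : ℝ) (φ : ℂ → ℝ)
    (hφ : ContDiffOn ℝ (⊤ : ℕ∞) φ (Metric.ball (0:ℂ) r₀ \ {0}))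
    {s : ℝ} (h0 : 0 < s) (h1 : s < r₀) (θ : ℝ) :
    HasDerivAt (fun s : ℝ => φ ((s:ℂ) * Complex.exp (θ * Complex.I)))
      ((fderiv ℝ φ ((s:ℂ) * Complex.exp (θ * Complex.I))) (Complex.exp (θ * Complex.I))) s := by
  have hU : IsOpen (Metric.ball (0:ℂ) r₀ \ {0}) :=
    Metric.isOpen_ball.sdiff isClosed_singleton
  have hmem : (s:ℂ) * Complex.exp (θ * Complex.I) ∈ Metric.ball (0:ℂ) r₀ \ {0} := by
    constructor
    · simp [Complex.dist_eq, map_mul, Complex.norm_exp_ofReal_mul_I, abs_of_pos h0, h1]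
    · simp [Complex.ofReal_ne_zero, ne_of_gt h0, Complex.exp_ne_zero]
  have hdφ : DifferentiableAt ℝ φ ((s:ℂ) * Complex.exp (θ * Complex.I)) :=
    (hφ.contDiffAt (hU.mem_nhds hmem)).differentiableAt (by simp)
  have hin : HasDerivAt (fun s : ℝ => (s:ℂ) * Complex.exp (θ * Complex.I))
      (Complex.exp (θ * Complex.I)) s := by
    simpa using (Complex.ofRealCLM.hasDerivAt (x := s)).mul_const (Complex.exp (θ * Complex.I))
  exact hdφ.hasFDerivAt.comp_hasDerivAt s hin

lemma cusp_deriv_integral (r₀ : ℝ) (φ : ℂ → ℝ)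
    (hφ : ContDiffOn ℝ (⊤ : ℕ∞) φ (Metric.ball (0:ℂ) r₀ \ {0}))
    {r : ℝ} (h0 : 0 < r) (h1 : r < r₀) :
    IntervalIntegrable
      (fun θ => deriv (fun s : ℝ => φ ((s:ℂ) * Complex.exp (θ * Complex.I))) r)
      MeasureTheory.volume 0 (2*Real.pi) ∧
    HasDerivAt
      (fun s : ℝ => ∫ θ in (0:ℝ)..(2*Real.pi), φ ((s:ℂ) * Complex.exp (θ * Complex.I)))
      (∫ θ in (0:ℝ)..(2*Real.pi),
        deriv (fun s : ℝ => φ ((s:ℂ) * Complex.exp (θ * Complex.I))) r) r := by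
  have hU : IsOpen (Metric.ball (0:ℂ) r₀ \ {0}) :=
    Metric.isOpen_ball.sdiff isClosed_singleton
  set U := Metric.ball (0:ℂ) r₀ \ {0} with hUdef
  have hmem : ∀ {s θ : ℝ}, 0 < s → s < r₀ → (s:ℂ) * Complex.exp (θ * Complex.I) ∈ U := by
    intro s θ hs hs'
    constructor
    · simp [Complex.dist_eq, map_mul, Complex.norm_exp_ofReal_mul_I, abs_of_pos hs, hs']
    · simp [Complex.ofReal_ne_zero, ne_of_gt hs, Complex.exp_ne_zero]
  -- the pointwise derivative
  set D : ℝ × ℝ → ℝ := fun p =>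
    (fderiv ℝ φ ((p.1:ℂ) * Complex.exp (p.2 * Complex.I))) (Complex.exp (p.2 * Complex.I))
    with hDdef
  -- continuity of D on the strip
  have hDcont : ContinuousOn D {p : ℝ × ℝ | 0 < p.1 ∧ p.1 < r₀} := by
    have hm : Continuous (fun p : ℝ × ℝ => (p.1:ℂ) * Complex.exp (p.2 * Complex.I)) := by
      fun_prop
    have hmaps : ∀ p ∈ {p : ℝ × ℝ | 0 < p.1 ∧ p.1 < r₀},
        (p.1:ℂ) * Complex.exp (p.2 * Complex.I) ∈ U := fun p hp => hmem hp.1 hp.2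
    have hf' : ContinuousOn (fderiv ℝ φ) U :=
      hφ.continuousOn_fderiv_of_isOpen hU (by simp)
    exact (hf'.comp hm.continuousOn hmaps).clm_apply
      (Continuous.continuousOn (by fun_prop))
  -- compact bound
  set δ := min (r/2) ((r₀ - r)/2) with hδ
  have hδpos : 0 < δ := lt_min (by linarith) (by linarith)
  have hsub : Icc (r - δ) (r + δ) ×ˢ Icc (0:ℝ) (2*Real.pi) ⊆
      {p : ℝ × ℝ | 0 < p.1 ∧ p.1 < r₀} := by
    rintro ⟨x, t⟩ ⟨hx, -⟩
    have h2 : δ ≤ r/2 := min_le_left _ _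
    have h3 : δ ≤ (r₀ - r)/2 := min_le_right _ _
    exact ⟨by simp at hx ⊢; cases hx with | intro a b => linarith,
      by simp at hx ⊢; cases hx with | intro a b => linarith⟩
  obtain ⟨C, hC⟩ := (isCompact_Icc.prod isCompact_Icc).exists_bound_of_continuousOn
    (hDcont.mono hsub)
  -- differentiability on ball
  have hball : ∀ x ∈ Metric.ball r δ, 0 < x ∧ x < r₀ := by
    intro x hx
    have := Real.dist_eq x r ▸ Metric.mem_ball.mp hx
    have h2 : δ ≤ r/2 := min_le_left _ _
    have h3 : δ ≤ (r₀ - r)/2 := min_le_right _ _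
    have := abs_lt.mp this
    constructor <;> linarith [this.1, this.2]
  have key := intervalIntegral.hasDerivAt_integral_of_dominated_loc_of_deriv_le
    (𝕜 := ℝ) (μ := volume) (a := 0) (b := 2*Real.pi)
    (F := fun (x : ℝ) (t : ℝ) => φ ((x:ℂ) * Complex.exp (t * Complex.I)))
    (F' := fun x t => D (x, t)) (x₀ := r) (bound := fun _ => C) (Metric.ball_mem_nhds r hδpos)
    ?_ ?_ ?_ ?_ ?_ ?_
  · obtain ⟨hint, hder⟩ := key
    have heq : (fun θ : ℝ => deriv (fun s : ℝ => φ ((s:ℂ) * Complex.exp (θ * Complex.I))) r)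
        = fun θ : ℝ => D (r, θ) := by
      funext θ
      exact (cusp_chain r₀ φ hφ h0 h1 θ).deriv
    rw [heq]
    exact ⟨hint, hder⟩
  · filter_upwards [Metric.ball_mem_nhds r hδpos] with x hx
    obtain ⟨hx0, hx1⟩ := hball x hx
    have : Continuous fun t : ℝ => φ ((x:ℂ) * Complex.exp (t * Complex.I)) := by
      apply hφ.continuousOn.comp_continuous (by fun_prop)
      intro t; exact hmem hx0 hx1
    exact this.aestronglyMeasurable
  · have : Continuous fun t : ℝ => φ ((r:ℂ) * Complex.exp (t * Complex.I)) := by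
      apply hφ.continuousOn.comp_continuous (by fun_prop)
      intro t; exact hmem h0 h1
    exact this.intervalIntegrable _ _
  · have : Continuous fun t : ℝ => D (r, t) := by
      apply hDcont.comp_continuous (by fun_prop)
      intro t; exact ⟨h0, h1⟩
    exact this.aestronglyMeasurable
  · filter_upwards with t ht
    intro x hx
    obtain ⟨hx0, hx1⟩ := hball x hx
    apply hC
    constructor
    · have := abs_lt.mp (Real.dist_eq x r ▸ Metric.mem_ball.mp hx)
      exact ⟨by linarith [this.1], by linarith [this.2]⟩
    · rcases Set.mem_uIoc.mp ht with h | h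
      · exact ⟨le_of_lt h.1, h.2⟩
      · exact absurd (h.1.trans_le h.2) (lt_asymm (by positivity : (0:ℝ) < 2*Real.pi))
  · exact intervalIntegrable_const
  · filter_upwards with t ht
    intro x hx
    obtain ⟨hx0, hx1⟩ := hball x hx
    exact cusp_chain r₀ φ hφ hx0 hx1 t

lemma cusp_avg_log (r₀ L : ℝ) (hr₀ : 0 < r₀) (φbar : ℝ → ℝ)
    (hd : ∀ s : ℝ, 0 < s → s < r₀ → DifferentiableAt ℝ φbar s)
    (hL : Tendsto (fun r => deriv φbar r * r) (nhdsWithin 0 (Set.Ioi 0)) (nhds L)) :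
    Tendsto (fun r => φbar r / Real.log r) (nhdsWithin 0 (Set.Ioi 0)) (nhds L) := by
  rw [Metric.tendsto_nhds]
  intro ε hε
  set ε' := ε/3 with hε'def
  have hε' : 0 < ε' := by positivity
  have hev : {s : ℝ | |deriv φbar s * s - L| < ε'} ∈ nhdsWithin 0 (Set.Ioi 0) := by
    have := Metric.tendsto_nhds.mp hL ε' hε'
    have h2 : ∀ᶠ s in nhdsWithin 0 (Set.Ioi 0), |deriv φbar s * s - L| < ε' := by
      simpa [Real.dist_eq] using this
    exact h2
  rw [Metric.mem_nhdsWithin_iff] at hev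
  obtain ⟨δ, hδpos, hδ⟩ := hev
  set δ₁ := min δ (min r₀ 1) with hδ₁def
  have hδ₁pos : 0 < δ₁ := lt_min hδpos (lt_min hr₀ one_pos)
  set ρ := δ₁/2 with hρdef
  have hρpos : 0 < ρ := by positivity
  -- basic facts on Ioo 0 δ₁
  have hfacts : ∀ s : ℝ, 0 < s → s < δ₁ →
      |deriv φbar s * s - L| < ε' ∧ DifferentiableAt ℝ φbar s := by
    intro s hs hs'
    have hs₀ : s < r₀ := lt_of_lt_of_le hs' (le_trans (min_le_right _ _) (min_le_left _ _))
    refine ⟨hδ ⟨?_, hs⟩, hd s hs hs₀⟩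
    simp only [Metric.mem_ball, Real.dist_eq, sub_zero]
    rw [abs_of_pos hs]
    exact lt_of_lt_of_le hs' (min_le_left _ _)
  -- monotonicity bounds for any slope c with appropriate sign
  have hmono : ∀ r : ℝ, 0 < r → r < ρ →
      φbar r ≥ (L + ε') * Real.log r + (φbar ρ - (L + ε') * Real.log ρ) ∧
      φbar r ≤ (L - ε') * Real.log r + (φbar ρ - (L - ε') * Real.log ρ) := by
    intro r hr hrρ
    have hIcc : Set.Icc r ρ ⊆ Set.Ioo 0 δ₁ := by
      intro s hs
      exact ⟨lt_of_lt_of_le hr hs.1, lt_of_le_of_lt hs.2 (by rw [hρdef]; linarith)⟩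
    have hderiv : ∀ c : ℝ, ∀ s ∈ Set.Ioo 0 δ₁,
        HasDerivAt (fun s => φbar s - c * Real.log s) (deriv φbar s - c * s⁻¹) s := by
      intro c s hs
      exact ((hfacts s hs.1 hs.2).2.hasDerivAt).sub
        ((Real.hasDerivAt_log (ne_of_gt hs.1)).const_mul c)
    have hcont : ∀ c : ℝ, ContinuousOn (fun s => φbar s - c * Real.log s) (Set.Icc r ρ) :=
      fun c => fun s hs => ((hderiv c s (hIcc hs)).continuousAt).continuousWithinAt
    have hdiff : ∀ c : ℝ, DifferentiableOn ℝ (fun s => φbar s - c * Real.log s)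
        (interior (Set.Icc r ρ)) := by
      intro c s hs
      rw [interior_Icc] at hs
      exact ((hderiv c s (hIcc (Set.Ioo_subset_Icc_self hs))).differentiableAt).differentiableWithinAt
    have hval : ∀ c : ℝ, ∀ s ∈ interior (Set.Icc r ρ),
        deriv (fun s => φbar s - c * Real.log s) s = (deriv φbar s * s - c) * s⁻¹ := by
      intro c s hs
      rw [interior_Icc] at hs
      have hs' := hIcc (Set.Ioo_subset_Icc_self hs)
      rw [(hderiv c s hs').deriv]
      rw [sub_mul, mul_assoc, mul_inv_cancel₀ (ne_of_gt hs'.1), mul_one]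
    constructor
    · -- antitone for c = L + ε'
      have hanti : AntitoneOn (fun s => φbar s - (L+ε') * Real.log s) (Set.Icc r ρ) := by
        apply antitoneOn_of_deriv_nonpos (convex_Icc r ρ) (hcont _) (hdiff _)
        intro s hs
        rw [hval _ s hs]
        rw [interior_Icc] at hs
        have hs' := hIcc (Set.Ioo_subset_Icc_self hs)
        have hb := (hfacts s hs'.1 hs'.2).1
        have h1 : deriv φbar s * s - (L + ε') ≤ 0 := by
          have := (abs_lt.mp hb).2; linarith
        exact mul_nonpos_iff.mpr (Or.inr ⟨h1, inv_nonneg.mpr hs'.1.le⟩)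
      have := hanti (Set.left_mem_Icc.mpr hrρ.le) (Set.right_mem_Icc.mpr hrρ.le) hrρ.le
      simp only at this
      linarith
    · -- monotone for c = L - ε'
      have hmono : MonotoneOn (fun s => φbar s - (L-ε') * Real.log s) (Set.Icc r ρ) := by
        apply monotoneOn_of_deriv_nonneg (convex_Icc r ρ) (hcont _) (hdiff _)
        intro s hs
        rw [hval _ s hs]
        rw [interior_Icc] at hs
        have hs' := hIcc (Set.Ioo_subset_Icc_self hs)
        have hb := (hfacts s hs'.1 hs'.2).1
        have h1 : 0 ≤ deriv φbar s * s - (L - ε') := by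
          have := (abs_lt.mp hb).1; linarith
        exact mul_nonneg h1 (inv_nonneg.mpr hs'.1.le)
      have := hmono (Set.left_mem_Icc.mpr hrρ.le) (Set.right_mem_Icc.mpr hrρ.le) hrρ.le
      simp only at this
      linarith
  -- the constants
  set cP := φbar ρ - (L + ε') * Real.log ρ with hcP
  set cM := φbar ρ - (L - ε') * Real.log ρ with hcM
  have hlogbot : Tendsto Real.log (nhdsWithin 0 (Set.Ioi 0)) atBot :=
    Real.tendsto_log_nhdsGT_zero
  have hinv : Tendsto (fun r : ℝ => (Real.log r)⁻¹) (nhdsWithin 0 (Set.Ioi 0)) (nhds 0) :=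
    inv_tendsto_atBot' hlogbot
  have hevP : ∀ᶠ r in nhdsWithin 0 (Set.Ioi 0), |cP * (Real.log r)⁻¹| < ε' := by
    have ht : Tendsto (fun r : ℝ => cP * (Real.log r)⁻¹) (nhdsWithin 0 (Set.Ioi 0)) (nhds 0) := by
      simpa using hinv.const_mul cP
    simpa [Real.dist_eq, abs_mul, abs_inv] using Metric.tendsto_nhds.mp ht ε' hε'
  have hevM : ∀ᶠ r in nhdsWithin 0 (Set.Ioi 0), |cM * (Real.log r)⁻¹| < ε' := by
    have ht : Tendsto (fun r : ℝ => cM * (Real.log r)⁻¹) (nhdsWithin 0 (Set.Ioi 0)) (nhds 0) := by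
      simpa using hinv.const_mul cM
    simpa [Real.dist_eq, abs_mul, abs_inv] using Metric.tendsto_nhds.mp ht ε' hε'
  have hevIoo : ∀ᶠ r in nhdsWithin 0 (Set.Ioi 0), r ∈ Set.Ioo (0:ℝ) (min ρ 1) := by
    exact Ioo_mem_nhdsGT_of_mem (by simp [lt_min hρpos one_pos])
  filter_upwards [hevP, hevM, hevIoo] with r hP hM hIoo
  obtain ⟨hr0, hr1⟩ := hIoo
  have hrρ : r < ρ := lt_of_lt_of_le hr1 (min_le_left _ _)
  have hr1' : r < 1 := lt_of_lt_of_le hr1 (min_le_right _ _)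
  have hlogneg : Real.log r < 0 := Real.log_neg hr0 hr1'
  have hloginvneg : (Real.log r)⁻¹ ≤ 0 := (inv_nonpos).mpr hlogneg.le
  obtain ⟨hlow, hhigh⟩ := hmono r hr0 hrρ
  -- divide by log r < 0
  have hne : Real.log r ≠ 0 := ne_of_lt hlogneg
  have key1 : φbar r / Real.log r ≤ (L + ε') + cP * (Real.log r)⁻¹ := by
    have := mul_le_mul_of_nonpos_right hlow hloginvneg
    rw [div_eq_mul_inv]
    calc φbar r * (Real.log r)⁻¹
        ≤ ((L + ε') * Real.log r + cP) * (Real.log r)⁻¹ := this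
      _ = (L + ε') + cP * (Real.log r)⁻¹ := by field_simp
  have key2 : (L - ε') + cM * (Real.log r)⁻¹ ≤ φbar r / Real.log r := by
    have := mul_le_mul_of_nonpos_right hhigh hloginvneg
    rw [div_eq_mul_inv]
    calc (L - ε') + cM * (Real.log r)⁻¹
        = ((L - ε') * Real.log r + cM) * (Real.log r)⁻¹ := by field_simp
      _ ≤ φbar r * (Real.log r)⁻¹ := this
  rw [Real.dist_eq, abs_lt]
  obtain ⟨ha1, ha2⟩ := abs_lt.mp hP
  obtain ⟨hb1, hb2⟩ := abs_lt.mp hM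
  constructor <;> [linarith; linarith]

/-- Equivalence of cusp and weak cusp singularities for a conformal metric
`e^{2φ}|dz|²` on a punctured disk, given Chen's properties (i)-(iii) of the
circular mean `φ̄(r) = (1/2π)∫₀^{2π} φ(re^{iθ})dθ`:
(i) `φ̄(r)+log r → -∞`; (ii) `φ̄'(r)·r` has a finite limit as `r → 0`;
(iii) the sandwich inequality. Then
`lim_{z→0}(φ(z)+log|z|)/log|z| = 0` (cusp) iff
`liminf_{r→0} ∫₀^{2π} r·∂(φ+log r)/∂r dθ = 0` (weak cusp). -/
theorem stmt_14 (r₀ : ℝ) (hr₀ : 0 < r₀) (φ : ℂ → ℝ) (φbar : ℝ → ℝ)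
    (hφ : ContDiffOn ℝ (⊤ : ℕ∞) φ (Metric.ball (0:ℂ) r₀ \ {0}))
    (hφbar : ∀ r : ℝ, φbar r =
      (1/(2*Real.pi)) * ∫ θ in (0:ℝ)..(2*Real.pi), φ ((r:ℂ) * Complex.exp (θ * Complex.I)))
    -- (i)
    (hi : Tendsto (fun r : ℝ => φbar r + Real.log r) (nhdsWithin 0 (Set.Ioi 0)) atBot)
    -- (ii)
    (hii : ∃ L : ℝ, Tendsto (fun r : ℝ => deriv φbar r * r) (nhdsWithin 0 (Set.Ioi 0)) (nhds L))
    -- (iii)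
    (hiii : ∃ β ∈ Set.Ioo (0:ℝ) 1, ∃ C₁ C₂ : ℝ, ∀ z : ℂ, z ≠ 0 → ‖z‖ < r₀ →
      (1/β) * (φbar (‖z‖) + Real.log (‖z‖)) + C₁
        ≤ φ z + Real.log (‖z‖) ∧
      φ z + Real.log (‖z‖)
        ≤ β * (φbar (‖z‖) + Real.log (‖z‖)) + C₂) :
    Tendsto (fun z : ℂ => (φ z + Real.log (‖z‖)) / Real.log (‖z‖))
        (nhdsWithin 0 {z : ℂ | z ≠ 0}) (nhds 0)
    ↔
    Filter.liminf
      (fun r : ℝ => ∫ θ in (0:ℝ)..(2*Real.pi),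
        (r * deriv (fun s : ℝ => φ ((s:ℂ) * Complex.exp (θ * Complex.I))) r + 1))
      (nhdsWithin 0 (Set.Ioi 0)) = 0 := by
  obtain ⟨L, hL⟩ := hii
  obtain ⟨β, hβ, C₁, C₂, hsand⟩ := hiii
  have hβ0 : 0 < β := hβ.1
  have hβne : β ≠ 0 := ne_of_gt hβ0
  have hπ : 0 < Real.pi := Real.pi_pos
  -- φbar has the expected derivative
  have hφd : ∀ r : ℝ, 0 < r → r < r₀ → HasDerivAt φbar
      ((1/(2*Real.pi)) * ∫ θ in (0:ℝ)..(2*Real.pi),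
        deriv (fun s : ℝ => φ ((s:ℂ) * Complex.exp (θ * Complex.I))) r) r := by
    intro r h0 h1
    have h := (cusp_deriv_integral r₀ φ hφ h0 h1).2
    have heq : φbar = fun s : ℝ => (1/(2*Real.pi)) *
        ∫ θ in (0:ℝ)..(2*Real.pi), φ ((s:ℂ) * Complex.exp (θ * Complex.I)) := funext hφbar
    rw [heq]
    exact h.const_mul _
  set I : ℝ → ℝ := fun r => ∫ θ in (0:ℝ)..(2*Real.pi),
      (r * deriv (fun s : ℝ => φ ((s:ℂ) * Complex.exp (θ * Complex.I))) r + 1) with hIdef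
  have hIeq : ∀ r : ℝ, 0 < r → r < r₀ → I r = 2*Real.pi * (deriv φbar r * r + 1) := by
    intro r h0 h1
    obtain ⟨hint, -⟩ := cusp_deriv_integral r₀ φ hφ h0 h1
    have hdd := (hφd r h0 h1).deriv
    have hint' : IntervalIntegrable (fun θ : ℝ =>
        r * deriv (fun s : ℝ => φ ((s:ℂ) * Complex.exp (θ * Complex.I))) r)
        MeasureTheory.volume 0 (2*Real.pi) := hint.const_mul r
    rw [hIdef]
    simp only
    rw [intervalIntegral.integral_add hint' intervalIntegrable_const,
      intervalIntegral.integral_const_mul, intervalIntegral.integral_const, hdd]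
    generalize (∫ θ in (0:ℝ)..(2*Real.pi), deriv (fun s : ℝ => φ ((s:ℂ) * Complex.exp (θ * Complex.I))) r) = J
    have hne : (2*Real.pi) ≠ 0 := by positivity
    field_simp
    ring
  have hIlim : Tendsto I (nhdsWithin 0 (Set.Ioi 0)) (nhds (2*Real.pi*(L+1))) := by
    have h2 : Tendsto (fun r : ℝ => 2*Real.pi*((deriv φbar r * r) + 1))
        (nhdsWithin 0 (Set.Ioi 0)) (nhds (2*Real.pi*(L+1))) :=
      (hL.add_const 1).const_mul _
    apply Filter.Tendsto.congr' _ h2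
    filter_upwards [Ioo_mem_nhdsGT_of_mem (Set.mem_Ico.mpr ⟨le_refl (0:ℝ), hr₀⟩)] with r hr
    exact (hIeq r hr.1 hr.2).symm
  have hliminf : Filter.liminf I (nhdsWithin 0 (Set.Ioi 0)) = 2*Real.pi*(L+1) :=
    hIlim.liminf_eq
  have hφbarlog : Tendsto (fun r : ℝ => φbar r / Real.log r)
      (nhdsWithin 0 (Set.Ioi 0)) (nhds L) :=
    cusp_avg_log r₀ L hr₀ φbar (fun s h0 h1 => (hφd s h0 h1).differentiableAt) hL
  have hA : Tendsto (fun r : ℝ => (φbar r + Real.log r) / Real.log r)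
      (nhdsWithin 0 (Set.Ioi 0)) (nhds (L+1)) := by
    have h2 : Tendsto (fun r : ℝ => φbar r / Real.log r + 1)
        (nhdsWithin 0 (Set.Ioi 0)) (nhds (L+1)) := hφbarlog.add_const 1
    apply Filter.Tendsto.congr' _ h2
    filter_upwards [Ioo_mem_nhdsGT_of_mem (Set.mem_Ico.mpr ⟨le_refl (0:ℝ), one_pos⟩)] with r hr
    have hlog : Real.log r ≠ 0 := ne_of_lt (Real.log_neg hr.1 hr.2)
    field_simp
  have hinvlog : Tendsto (fun r : ℝ => (Real.log r)⁻¹) (nhdsWithin 0 (Set.Ioi 0)) (nhds 0) :=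
    inv_tendsto_atBot' Real.tendsto_log_nhdsGT_zero
  constructor
  · -- cusp → weak cusp
    intro ha
    have hcomp : Tendsto (fun r : ℝ => (r:ℂ)) (nhdsWithin 0 (Set.Ioi 0))
        (nhdsWithin 0 {z : ℂ | z ≠ 0}) := by
      apply tendsto_nhdsWithin_of_tendsto_nhds_of_eventually_within
      · simpa using (Complex.continuous_ofReal.tendsto 0).mono_left nhdsWithin_le_nhds
      · filter_upwards [self_mem_nhdsWithin] with r hr
        simpa using ne_of_gt (hr : (0:ℝ) < r)
    have hp := ha.comp hcomp
    have hp' : Tendsto (fun r : ℝ => (φ (r:ℂ) + Real.log r) / Real.log r)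
        (nhdsWithin 0 (Set.Ioi 0)) (nhds 0) := by
      apply Filter.Tendsto.congr' _ hp
      filter_upwards [self_mem_nhdsWithin] with r hr
      simp [Function.comp, Complex.norm_real, Real.norm_eq_abs, abs_of_pos (Set.mem_Ioi.mp hr)]
    have hg : Tendsto (fun r : ℝ =>
        β * ((φ (r:ℂ) + Real.log r) / Real.log r - C₁ * (Real.log r)⁻¹))
        (nhdsWithin 0 (Set.Ioi 0)) (nhds 0) := by
      have := (hp'.sub (hinvlog.const_mul C₁)).const_mul β
      simpa using this
    have hh : Tendsto (fun r : ℝ =>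
        (1/β) * ((φ (r:ℂ) + Real.log r) / Real.log r - C₂ * (Real.log r)⁻¹))
        (nhdsWithin 0 (Set.Ioi 0)) (nhds 0) := by
      have := (hp'.sub (hinvlog.const_mul C₂)).const_mul (1/β)
      simpa using this
    have hev : ∀ᶠ r : ℝ in nhdsWithin 0 (Set.Ioi 0),
        β * ((φ (r:ℂ) + Real.log r) / Real.log r - C₁ * (Real.log r)⁻¹)
          ≤ (φbar r + Real.log r) / Real.log r ∧
        (φbar r + Real.log r) / Real.log r
          ≤ (1/β) * ((φ (r:ℂ) + Real.log r) / Real.log r - C₂ * (Real.log r)⁻¹) := by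
      filter_upwards [Ioo_mem_nhdsGT_of_mem
        (Set.mem_Ico.mpr ⟨le_refl (0:ℝ), lt_min hr₀ one_pos⟩)] with r hr
      obtain ⟨hr0, hr1⟩ := hr
      have hrr₀ : r < r₀ := lt_of_lt_of_le hr1 (min_le_left _ _)
      have hr1' : r < 1 := lt_of_lt_of_le hr1 (min_le_right _ _)
      have habs : ‖(r:ℂ)‖ = r := by
        rw [Complex.norm_real, Real.norm_eq_abs, abs_of_pos hr0]
      obtain ⟨hlow, hhigh⟩ := hsand (r:ℂ) (by simpa using ne_of_gt hr0) (by rw [habs]; exact hrr₀)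
      rw [habs] at hlow hhigh
      have hlogneg : Real.log r < 0 := Real.log_neg hr0 hr1'
      have hinvle : (Real.log r)⁻¹ ≤ 0 := inv_nonpos.mpr hlogneg.le
      set A := φbar r + Real.log r with hAdef
      set χ := φ (r:ℂ) + Real.log r with hχdef
      set t := Real.log r with htdef
      have h1 : A ≤ β * χ - β * C₁ := by
        have e : β * ((1/β) * A + C₁) ≤ β * χ := mul_le_mul_of_nonneg_left hlow hβ0.le
        have e2 : β * ((1/β) * A + C₁) = A + β * C₁ := by field_simp
        linarith [e2 ▸ e]
      have h2 : (1/β) * χ - (1/β) * C₂ ≤ A := by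
        have e : (1/β) * χ ≤ (1/β) * (β * A + C₂) :=
          mul_le_mul_of_nonneg_left hhigh (by positivity)
        have e2 : (1/β) * (β * A + C₂) = A + (1/β) * C₂ := by field_simp
        linarith [e2 ▸ e]
      constructor
      · calc β * (χ / t - C₁ * t⁻¹) = (β * χ - β * C₁) * t⁻¹ := by
              rw [div_eq_mul_inv]; ring
          _ ≤ A * t⁻¹ := mul_le_mul_of_nonpos_right h1 hinvle
          _ = A / t := (div_eq_mul_inv A t).symm
      · calc A / t = A * t⁻¹ := div_eq_mul_inv A t
          _ ≤ ((1/β) * χ - (1/β) * C₂) * t⁻¹ := mul_le_mul_of_nonpos_right h2 hinvle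
          _ = (1/β) * (χ / t - C₂ * t⁻¹) := by rw [div_eq_mul_inv]; ring
    have hsq : Tendsto (fun r : ℝ => (φbar r + Real.log r) / Real.log r)
        (nhdsWithin 0 (Set.Ioi 0)) (nhds 0) :=
      tendsto_of_tendsto_of_tendsto_of_le_of_le' hg hh
        (hev.mono fun r h => h.1) (hev.mono fun r h => h.2)
    have hL1 : L + 1 = 0 := tendsto_nhds_unique hA hsq
    rw [hliminf, hL1, mul_zero]
  · -- weak cusp → cusp
    intro hb
    have hL1 : L + 1 = 0 := by
      have h2 : 2*Real.pi*(L+1) = 0 := by rw [← hliminf, hb]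
      rcases mul_eq_zero.mp h2 with h | h
      · exact absurd h (by positivity)
      · exact h
    rw [hL1] at hA
    have habs : Tendsto (fun z : ℂ => ‖z‖) (nhdsWithin 0 {z : ℂ | z ≠ 0})
        (nhdsWithin 0 (Set.Ioi 0)) := by
      apply tendsto_nhdsWithin_of_tendsto_nhds_of_eventually_within
      · simpa using (continuous_norm.tendsto (0:ℂ)).mono_left nhdsWithin_le_nhds
      · filter_upwards [self_mem_nhdsWithin] with z hz
        simpa using norm_pos_iff.mpr (hz : z ≠ 0)
    have hq : Tendsto (fun z : ℂ =>
        (φbar (‖z‖) + Real.log (‖z‖)) / Real.log (‖z‖))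
        (nhdsWithin 0 {z : ℂ | z ≠ 0}) (nhds 0) := hA.comp habs
    have hqinv : Tendsto (fun z : ℂ => (Real.log (‖z‖))⁻¹)
        (nhdsWithin 0 {z : ℂ | z ≠ 0}) (nhds 0) := hinvlog.comp habs
    have hg : Tendsto (fun z : ℂ =>
        β * ((φbar (‖z‖) + Real.log (‖z‖)) / Real.log (‖z‖))
          + C₂ * (Real.log (‖z‖))⁻¹)
        (nhdsWithin 0 {z : ℂ | z ≠ 0}) (nhds 0) := by
      have := (hq.const_mul β).add (hqinv.const_mul C₂)
      simpa using this
    have hh : Tendsto (fun z : ℂ =>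
        (1/β) * ((φbar (‖z‖) + Real.log (‖z‖)) / Real.log (‖z‖))
          + C₁ * (Real.log (‖z‖))⁻¹)
        (nhdsWithin 0 {z : ℂ | z ≠ 0}) (nhds 0) := by
      have := (hq.const_mul (1/β)).add (hqinv.const_mul C₁)
      simpa using this
    have hev : ∀ᶠ z : ℂ in nhdsWithin 0 {z : ℂ | z ≠ 0},
        β * ((φbar (‖z‖) + Real.log (‖z‖)) / Real.log (‖z‖))
            + C₂ * (Real.log (‖z‖))⁻¹
          ≤ (φ z + Real.log (‖z‖)) / Real.log (‖z‖) ∧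
        (φ z + Real.log (‖z‖)) / Real.log (‖z‖)
          ≤ (1/β) * ((φbar (‖z‖) + Real.log (‖z‖)) / Real.log (‖z‖))
            + C₁ * (Real.log (‖z‖))⁻¹ := by
      filter_upwards [habs.eventually (Ioo_mem_nhdsGT_of_mem
        (Set.mem_Ico.mpr ⟨le_refl (0:ℝ), lt_min hr₀ one_pos⟩))] with z hz
      obtain ⟨hz0, hz1⟩ := hz
      have hzne : z ≠ 0 := by
        intro h; rw [h] at hz0; simp at hz0
      have hzr₀ : ‖z‖ < r₀ := lt_of_lt_of_le hz1 (min_le_left _ _)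
      have hz1' : ‖z‖ < 1 := lt_of_lt_of_le hz1 (min_le_right _ _)
      obtain ⟨hlow, hhigh⟩ := hsand z hzne hzr₀
      have hlogneg : Real.log (‖z‖) < 0 := Real.log_neg hz0 hz1'
      have hinvle : (Real.log (‖z‖))⁻¹ ≤ 0 := inv_nonpos.mpr hlogneg.le
      set A := φbar (‖z‖) + Real.log (‖z‖) with hAdef
      set χ := φ z + Real.log (‖z‖) with hχdef
      set t := Real.log (‖z‖) with htdef
      constructor
      · calc β * (A / t) + C₂ * t⁻¹ = (β * A + C₂) * t⁻¹ := by
              rw [div_eq_mul_inv]; ring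
          _ ≤ χ * t⁻¹ := mul_le_mul_of_nonpos_right hhigh hinvle
          _ = χ / t := (div_eq_mul_inv χ t).symm
      · calc χ / t = χ * t⁻¹ := div_eq_mul_inv χ t
          _ ≤ ((1/β) * A + C₁) * t⁻¹ := mul_le_mul_of_nonpos_right hlow hinvle
          _ = (1/β) * (A / t) + C₁ * t⁻¹ := by rw [div_eq_mul_inv]; ring
    exact tendsto_of_tendsto_of_tendsto_of_le_of_le' hg hh
      (hev.mono fun z h => h.1) (hev.mono fun z h => h.2)
end

section
/- Let μ < 0 and let K : D \ {0} → (μ, -2μ) satisfy, on a punctured disk, the equation log(-2μ-K(z)) - log(K(z)-μ) - 3μ/(K(z)-μ) = (2λ/Λ)·log|z| + h(z), where λ > 0, Λ < 0 are reals and h is a bounded continuous function on D \ {0}. Then lim_{z→0} K(z) = μ. -/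
/-!
On `[μ + ε, -2μ)` the function `σ μ t = log(-2μ-t) - log(t-μ) - 3μ/(t-μ)` is bounded above by
`log(-3μ) - log ε - 3μ/ε`, while the right-hand side `(2λ/Λ) log‖z‖ + h z` tends to `+∞` as
`z → 0`, because `2λ/Λ < 0` and `h` is bounded. So eventually `K z < μ + ε`.
-/

open Filter Topology

noncomputable def σ (μ t : ℝ) : ℝ :=
  Real.log (-2*μ - t) - Real.log (t - μ) - 3*μ/(t - μ)

theorem lt_add_of_lt_σ {μ t ε : ℝ} (ht : t ∈ Set.Ioo μ (-2*μ)) (hε : 0 < ε)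
    (hσ : Real.log (-3*μ) - Real.log ε - 3*μ/ε < σ μ t) : t < μ + ε := by
  obtain ⟨hμt, htμ⟩ := ht
  by_contra! hεt
  have hlog_num : Real.log (-2*μ - t) ≤ Real.log (-3*μ) :=
    Real.log_le_log (by linarith) (by linarith)
  have hlog_den : Real.log ε ≤ Real.log (t - μ) := Real.log_le_log hε (by linarith)
  have hfrac : -3*μ/(t - μ) ≤ -3*μ/ε :=
    div_le_div_of_nonneg_left (by linarith) hε (by linarith)
  have hneg : -(3*μ/(t - μ)) = -3*μ/(t - μ) := by ring
  have hneg' : -(3*μ/ε) = -3*μ/ε := by ring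
  unfold σ at hσ
  linarith

theorem tendsto_mul_log_norm_add_atTop {E : Type*} [NormedAddCommGroup E] {s : Set E}
    {c M : ℝ} {h : E → ℝ} (hc : c < 0) (hh : ∀ z ∈ s \ {0}, M ≤ h z) :
    Tendsto (fun z => c * Real.log ‖z‖ + h z) (𝓝[s \ {0}] 0) atTop := by
  have hle : 𝓝[s \ {0}] (0 : E) ≤ 𝓝[≠] 0 := nhdsWithin_mono _ (Set.sdiff_subset_compl _ _)
  have hlog : Tendsto (fun z : E => Real.log ‖z‖) (𝓝[s \ {0}] 0) atBot :=
    (Real.tendsto_log_nhdsGT_zero.comp tendsto_norm_nhdsNE_zero).mono_left hle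
  exact tendsto_atTop_add_right_of_le' _ M (hlog.const_mul_atBot_of_neg hc)
    (eventually_nhdsWithin_of_forall hh)

theorem stmt_18_general (μ : ℝ) (r : ℝ)
    (K : ℂ → ℝ) (h : ℂ → ℝ) (l Λ : ℝ) (hl : 0 < l) (hΛ : Λ < 0)
    (hKrange : ∀ z ∈ Metric.ball (0:ℂ) r \ {0}, K z ∈ Set.Ioo μ (-2*μ))
    (hh_bdd : ∃ M : ℝ, ∀ z ∈ Metric.ball (0:ℂ) r \ {0}, |h z| ≤ M)
    (heq : ∀ z ∈ Metric.ball (0:ℂ) r \ {0},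
      Real.log (-2*μ - K z) - Real.log (K z - μ) - 3*μ/(K z - μ)
        = (2*l/Λ) * Real.log ‖z‖ + h z) :
    Tendsto K (nhdsWithin 0 (Metric.ball (0:ℂ) r \ {0})) (nhds μ) := by
  obtain ⟨M, hM⟩ := hh_bdd
  have hrhs : Tendsto (fun z => (2*l/Λ) * Real.log ‖z‖ + h z)
      (𝓝[Metric.ball (0:ℂ) r \ {0}] 0) atTop :=
    tendsto_mul_log_norm_add_atTop (div_neg_of_pos_of_neg (by linarith) hΛ)
      fun z hz => neg_le_of_abs_le (hM z hz)
  have hmem : ∀ᶠ z in 𝓝[Metric.ball (0:ℂ) r \ {0}] 0, z ∈ Metric.ball (0:ℂ) r \ {0} :=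
    self_mem_nhdsWithin
  refine tendsto_order.2 ⟨fun a ha => hmem.mono fun z hz => ha.trans (hKrange z hz).1,
    fun b hb => ?_⟩
  filter_upwards [hmem, hrhs.eventually_gt_atTop
    (Real.log (-3*μ) - Real.log (b - μ) - 3*μ/(b - μ))] with z hz hbig
  simpa using lt_add_of_lt_σ (hKrange z hz) (sub_pos.2 hb) (hbig.trans_eq (heq z hz).symm)

/-- If `μ < 0`, `K` takes values in `(μ,-2μ)` on a punctured disk and satisfies
`log(-2μ-K) - log(K-μ) - 3μ/(K-μ) = (2λ/Λ)log|z| + h(z)` with `λ > 0`, `Λ < 0`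
and `h` bounded and continuous on the punctured disk, then `K(z) → μ` as `z → 0`. -/
theorem stmt_18 (μ : ℝ) (hμ : μ < 0) (r : ℝ) (hr : 0 < r)
    (K : ℂ → ℝ) (h : ℂ → ℝ) (l Λ : ℝ) (hl : 0 < l) (hΛ : Λ < 0)
    (hKrange : ∀ z ∈ Metric.ball (0:ℂ) r \ {0}, K z ∈ Set.Ioo μ (-2*μ))
    (hh_cont : ContinuousOn h (Metric.ball (0:ℂ) r \ {0}))
    (hh_bdd : ∃ M : ℝ, ∀ z ∈ Metric.ball (0:ℂ) r \ {0}, |h z| ≤ M)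
    (heq : ∀ z ∈ Metric.ball (0:ℂ) r \ {0},
      Real.log (-2*μ - K z) - Real.log (K z - μ) - 3*μ/(K z - μ)
        = (2*l/Λ) * Real.log ‖z‖ + h z) :
    Tendsto K (nhdsWithin 0 (Metric.ball (0:ℂ) r \ {0})) (nhds μ) :=
  stmt_18_general μ r K h l Λ hl hΛ hKrange hh_bdd heq
end
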